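/- Let $\phi$ be differentiable with Bregman divergence $B_\phi$, and let $x, x'$ be i.i.d. random vectors with mean $\mu$. Then $\mathbb{E}[B_\phi(x, x')] = \mathbb{E}[B_\phi(x, \mu)] + \mathbb{E}[B_\phi(\mu, x)]$, assuming all expectations exist. -/

import Mathlib

open MeasureTheory ProbabilityTheory

/-- The Bregman divergence of a differentiable `φ : ℝ^m → ℝ`. -/
noncomputable def bregman {m : ℕ} (φ : EuclideanSpace ℝ (Fin m) → ℝ)
    (x y : EuclideanSpace ℝ (Fin m)) : ℝ :=
  φ x - φ y - inner ℝ (x - y) (gradient φ y)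

lemma measurable_gradient_euc {m : ℕ} (φ : EuclideanSpace ℝ (Fin m) → ℝ) :
    Measurable (gradient φ) := by
  have : gradient φ = fun x =>
      (InnerProductSpace.toDual ℝ (EuclideanSpace ℝ (Fin m))).symm (fderiv ℝ φ x) := rfl
  rw [this]
  exact (LinearIsometryEquiv.continuous _).measurable.comp (measurable_fderiv ℝ φ)

lemma indep_inner_aux {Ω : Type*} [MeasurableSpace Ω] {P : Measure Ω}
    [IsProbabilityMeasure P] {m : ℕ} {A B : Ω → EuclideanSpace ℝ (Fin m)}
    (hAB : IndepFun A B P) (hA : Integrable A P) (hB : Integrable B P) :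
    Integrable (fun ω => (inner ℝ (A ω) (B ω) : ℝ)) P ∧
      ∫ ω, (inner ℝ (A ω) (B ω) : ℝ) ∂P = inner ℝ (∫ ω, A ω ∂P) (∫ ω, B ω ∂P) := by
  have hpm : ∀ i : Fin m, Measurable (fun x : EuclideanSpace ℝ (Fin m) => x i) := fun i =>
    (EuclideanSpace.proj i : EuclideanSpace ℝ (Fin m) →L[ℝ] ℝ).measurable
  have hcomp : ∀ i : Fin m, IndepFun (fun ω => A ω i) (fun ω => B ω i) P := fun i =>
    hAB.comp (hpm i) (hpm i)
  have hAi : ∀ i, Integrable (fun ω => A ω i) P := fun i =>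
    (EuclideanSpace.proj i : EuclideanSpace ℝ (Fin m) →L[ℝ] ℝ).integrable_comp hA
  have hBi : ∀ i, Integrable (fun ω => B ω i) P := fun i =>
    (EuclideanSpace.proj i : EuclideanSpace ℝ (Fin m) →L[ℝ] ℝ).integrable_comp hB
  have hprod : ∀ i : Fin m, Integrable (fun ω => A ω i * B ω i) P := fun i =>
    (hcomp i).integrable_mul (hAi i) (hBi i)
  have hinner : (fun ω => (inner ℝ (A ω) (B ω) : ℝ)) = fun ω => ∑ i, A ω i * B ω i := by
    ext ω
    simp [PiLp.inner_apply, RCLike.inner_apply, map_sum, mul_comm]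
  constructor
  · rw [hinner]
    exact integrable_finset_sum _ fun i _ => hprod i
  · rw [hinner, integral_finset_sum _ fun i _ => hprod i]
    rw [PiLp.inner_apply]
    congr 1
    ext i
    have h1 : ∫ ω, A ω i ∂P = (∫ ω, A ω ∂P) i := by
      simpa using (EuclideanSpace.proj i).integral_comp_comm hA
    have h2 : ∫ ω, B ω i ∂P = (∫ ω, B ω ∂P) i := by
      simpa using (EuclideanSpace.proj i).integral_comp_comm hB
    have := (hcomp i).integral_fun_mul_eq_mul_integral (hAi i).1 (hBi i).1
    simp only [RCLike.inner_apply, conj_trivial]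
    calc ∫ ω, A ω i * B ω i ∂P = (∫ ω, A ω i ∂P) * ∫ ω, B ω i ∂P := this
    _ = (∫ ω, B ω ∂P) i * (∫ ω, A ω ∂P) i := by rw [h1, h2, mul_comm]


lemma integrable_const_inner {Ω : Type*} [MeasurableSpace Ω] {P : Measure Ω} {m : ℕ}
    {Y : Ω → EuclideanSpace ℝ (Fin m)} (hY : Integrable Y P) (c : EuclideanSpace ℝ (Fin m)) :
    Integrable (fun ω => (inner ℝ c (Y ω) : ℝ)) P := by
  have := (innerSL ℝ c).integrable_comp hY
  simpa using this

lemma integrable_inner_const {Ω : Type*} [MeasurableSpace Ω] {P : Measure Ω} {m : ℕ}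
    {Y : Ω → EuclideanSpace ℝ (Fin m)} (hY : Integrable Y P) (c : EuclideanSpace ℝ (Fin m)) :
    Integrable (fun ω => (inner ℝ (Y ω) c : ℝ)) P := by
  have h : (fun ω => (inner ℝ (Y ω) c : ℝ)) = fun ω => (inner ℝ c (Y ω) : ℝ) :=
    funext fun ω => real_inner_comm _ _
  rw [h]; exact integrable_const_inner hY c

lemma integral_const_inner {Ω : Type*} [MeasurableSpace Ω] {P : Measure Ω} {m : ℕ}
    {Y : Ω → EuclideanSpace ℝ (Fin m)} (hY : Integrable Y P) (c : EuclideanSpace ℝ (Fin m)) :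
    ∫ ω, (inner ℝ c (Y ω) : ℝ) ∂P = (inner ℝ c (∫ ω, Y ω ∂P) : ℝ) := by
  have h := (innerSL ℝ c).integral_comp_comm hY
  simpa using h

lemma integral_inner_const {Ω : Type*} [MeasurableSpace Ω] {P : Measure Ω} {m : ℕ}
    {Y : Ω → EuclideanSpace ℝ (Fin m)} (hY : Integrable Y P) (c : EuclideanSpace ℝ (Fin m)) :
    ∫ ω, (inner ℝ (Y ω) c : ℝ) ∂P = (inner ℝ (∫ ω, Y ω ∂P) c : ℝ) := by
  have h : (fun ω => (inner ℝ (Y ω) c : ℝ)) = fun ω => (inner ℝ c (Y ω) : ℝ) :=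
    funext fun ω => real_inner_comm _ _
  rw [h, integral_const_inner hY c, real_inner_comm]

/-- For i.i.d. `x, x'` with mean `μ`:
`E[B_φ(x,x')] = E[B_φ(x,μ)] + E[B_φ(μ,x)]`. -/
theorem expected_bregman_pair
    {Ω : Type*} [MeasurableSpace Ω] (P : Measure Ω) [IsProbabilityMeasure P]
    {m : ℕ} (φ : EuclideanSpace ℝ (Fin m) → ℝ) (hφ : Differentiable ℝ φ)
    (X X' : Ω → EuclideanSpace ℝ (Fin m))
    (hmX : Measurable X) (hmX' : Measurable X')
    (hindep : IndepFun X X' P)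
    (hident : Measure.map X P = Measure.map X' P)
    (hintX : Integrable X P)
    (μ : EuclideanSpace ℝ (Fin m)) (hμ : μ = ∫ ω, X ω ∂P)
    (hint1 : Integrable (fun ω => bregman φ (X ω) (X' ω)) P)
    (hint2 : Integrable (fun ω => bregman φ (X ω) μ) P)
    (hint3 : Integrable (fun ω => bregman φ μ (X ω)) P)
    (hint4 : Integrable (fun ω => φ (X ω)) P)
    (hint5 : Integrable (fun ω => gradient φ (X ω)) P) :
    ∫ ω, bregman φ (X ω) (X' ω) ∂P
      = (∫ ω, bregman φ (X ω) μ ∂P) + ∫ ω, bregman φ μ (X ω) ∂P := by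
  have hgm : Measurable (gradient φ) := measurable_gradient_euc φ
  have hφm : Measurable φ := hφ.continuous.measurable
  -- transfer along identical distribution
  have ident_int : ∀ {F : Type} [NormedAddCommGroup F] [NormedSpace ℝ F]
      (g : EuclideanSpace ℝ (Fin m) → F), AEStronglyMeasurable g (Measure.map X P) →
      (Integrable (fun ω => g (X ω)) P ↔ Integrable (fun ω => g (X' ω)) P) := by
    intro F _ _ g hg
    have h1 := integrable_map_measure hg hmX.aemeasurable
    have h2 := integrable_map_measure (hident ▸ hg) hmX'.aemeasurable
    rw [hident] at h1
    exact h1.symm.trans h2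
  have ident_eq : ∀ {F : Type} [NormedAddCommGroup F] [NormedSpace ℝ F]
      (g : EuclideanSpace ℝ (Fin m) → F), AEStronglyMeasurable g (Measure.map X P) →
      ∫ ω, g (X ω) ∂P = ∫ ω, g (X' ω) ∂P := by
    intro F _ _ g hg
    rw [← integral_map hmX.aemeasurable hg, ← integral_map hmX'.aemeasurable (hident ▸ hg),
      hident]
  -- notation
  set G : Ω → EuclideanSpace ℝ (Fin m) := fun ω => gradient φ (X' ω) with hG
  set GX : Ω → EuclideanSpace ℝ (Fin m) := fun ω => gradient φ (X ω) with hGX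
  -- integrability transfers along identical distribution
  have hintφX' : Integrable (fun ω => φ (X' ω)) P :=
    (ident_int φ hφm.aestronglyMeasurable).mp hint4
  have hintG : Integrable G P :=
    (ident_int (gradient φ) hgm.aestronglyMeasurable).mp hint5
  -- independence of X and G
  have hXGindep : IndepFun X G P := hindep.comp measurable_id hgm
  obtain ⟨hintXG, hXGeq⟩ := indep_inner_aux hXGindep hintX hintG
  have hmXinner : Measurable (fun v : EuclideanSpace ℝ (Fin m) => (inner ℝ v (gradient φ v) : ℝ)) :=
    measurable_id.inner hgm
  have eqφ : ∫ ω, φ (X' ω) ∂P = ∫ ω, φ (X ω) ∂P :=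
    (ident_eq φ hφm.aestronglyMeasurable).symm
  have eqG : ∫ ω, G ω ∂P = ∫ ω, GX ω ∂P :=
    (ident_eq (gradient φ) hgm.aestronglyMeasurable).symm
  have eqD : ∫ ω, (inner ℝ (X' ω) (G ω) : ℝ) ∂P = ∫ ω, (inner ℝ (X ω) (GX ω) : ℝ) ∂P :=
    (ident_eq (fun v => (inner ℝ v (gradient φ v) : ℝ)) hmXinner.aestronglyMeasurable).symm
  -- abbreviations for key scalars
  set A : ℝ := ∫ ω, φ (X ω) ∂P with hA
  set g : EuclideanSpace ℝ (Fin m) := ∫ ω, GX ω ∂P with hg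
  set D : ℝ := ∫ ω, (inner ℝ (X ω) (GX ω) : ℝ) ∂P with hD
  -- value of the independent cross term
  have hcross : ∫ ω, (inner ℝ (X ω) (G ω) : ℝ) ∂P = (inner ℝ μ g : ℝ) := by
    rw [hXGeq, ← hμ, eqG]
  -- integrability of various inner products
  have hinnXX' : Integrable (fun ω => (inner ℝ (X ω - X' ω) (G ω) : ℝ)) P := by
    have : (fun ω => (inner ℝ (X ω - X' ω) (G ω) : ℝ))
        = fun ω => φ (X ω) - φ (X' ω) - bregman φ (X ω) (X' ω) := by
      funext ω; simp only [bregman, hG]; ring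
    rw [this]; exact (hint4.sub hintφX').sub hint1
  have hinnX'G : Integrable (fun ω => (inner ℝ (X' ω) (G ω) : ℝ)) P := by
    have : (fun ω => (inner ℝ (X' ω) (G ω) : ℝ))
        = fun ω => (inner ℝ (X ω) (G ω) : ℝ) - (inner ℝ (X ω - X' ω) (G ω) : ℝ) := by
      funext ω; rw [inner_sub_left]; ring
    rw [this]; exact hintXG.sub hinnXX'
  have hinnμGX : Integrable (fun ω => (inner ℝ μ (GX ω) : ℝ)) P :=
    (innerSL ℝ μ).integrable_comp hint5
  have hinn3 : Integrable (fun ω => (inner ℝ (μ - X ω) (GX ω) : ℝ)) P := by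
    have : (fun ω => (inner ℝ (μ - X ω) (GX ω) : ℝ))
        = fun ω => φ μ - φ (X ω) - bregman φ μ (X ω) := by
      funext ω; simp only [bregman, hGX]; ring
    rw [this]; exact ((integrable_const (φ μ)).sub hint4).sub hint3
  have hinnXGX : Integrable (fun ω => (inner ℝ (X ω) (GX ω) : ℝ)) P := by
    have : (fun ω => (inner ℝ (X ω) (GX ω) : ℝ))
        = fun ω => (inner ℝ μ (GX ω) : ℝ) - (inner ℝ (μ - X ω) (GX ω) : ℝ) := by
      funext ω; rw [inner_sub_left]; ring
    rw [this]; exact hinnμGX.sub hinn3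
  have hXsub : Integrable (fun ω => X ω - μ) P := hintX.sub (integrable_const μ)
  have hinn2 : Integrable (fun ω => (inner ℝ (X ω - μ) (gradient φ μ) : ℝ)) P :=
    integrable_inner_const hXsub _
  -- LHS
  have hLHS : ∫ ω, bregman φ (X ω) (X' ω) ∂P = A - A - ((inner ℝ μ g : ℝ) - D) := by
    have h12 : Integrable (fun ω => φ (X ω) - φ (X' ω)) P := hint4.sub hintφX'
    have hsplit : ∫ ω, bregman φ (X ω) (X' ω) ∂P
        = (∫ ω, (φ (X ω) - φ (X' ω)) ∂P)
          - ∫ ω, (inner ℝ (X ω - X' ω) (G ω) : ℝ) ∂P := by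
      simp only [bregman]
      exact integral_sub h12 hinnXX'
    have hsub : ∫ ω, (inner ℝ (X ω - X' ω) (G ω) : ℝ) ∂P = (inner ℝ μ g : ℝ) - D := by
      have h1 : (fun ω => (inner ℝ (X ω - X' ω) (G ω) : ℝ))
          = fun ω => (inner ℝ (X ω) (G ω) : ℝ) - (inner ℝ (X' ω) (G ω) : ℝ) := by
        funext ω; rw [inner_sub_left]
      rw [h1, integral_sub hintXG hinnX'G, hcross, eqD]
    rw [hsplit, hsub, integral_sub hint4 hintφX', eqφ]
  -- second term on the RHS
  have hRHS2 : ∫ ω, bregman φ (X ω) μ ∂P = A - φ μ := by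
    have h12 : Integrable (fun ω => φ (X ω) - φ μ) P := hint4.sub (integrable_const (φ μ))
    have hsplit : ∫ ω, bregman φ (X ω) μ ∂P
        = (∫ ω, (φ (X ω) - φ μ) ∂P)
          - ∫ ω, (inner ℝ (X ω - μ) (gradient φ μ) : ℝ) ∂P := by
      simp only [bregman]
      exact integral_sub h12 hinn2
    have hzero : ∫ ω, (inner ℝ (X ω - μ) (gradient φ μ) : ℝ) ∂P = 0 := by
      rw [integral_inner_const hXsub (gradient φ μ),
        integral_sub hintX (integrable_const μ)]
      simp [← hμ]
    rw [hsplit, hzero, integral_sub hint4 (integrable_const (φ μ))]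
    simp [hA]
  -- third term on the RHS
  have hRHS3 : ∫ ω, bregman φ μ (X ω) ∂P = φ μ - A - ((inner ℝ μ g : ℝ) - D) := by
    have h12 : Integrable (fun ω => φ μ - φ (X ω)) P := (integrable_const (φ μ)).sub hint4
    have hsplit : ∫ ω, bregman φ μ (X ω) ∂P
        = (∫ ω, (φ μ - φ (X ω)) ∂P)
          - ∫ ω, (inner ℝ (μ - X ω) (GX ω) : ℝ) ∂P := by
      simp only [bregman]
      exact integral_sub h12 hinn3
    have hsub : ∫ ω, (inner ℝ (μ - X ω) (GX ω) : ℝ) ∂P = (inner ℝ μ g : ℝ) - D := by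
      have h1 : (fun ω => (inner ℝ (μ - X ω) (GX ω) : ℝ))
          = fun ω => (inner ℝ μ (GX ω) : ℝ) - (inner ℝ (X ω) (GX ω) : ℝ) := by
        funext ω; rw [inner_sub_left]
      rw [h1, integral_sub hinnμGX hinnXGX, integral_const_inner hint5 μ]
    rw [hsplit, hsub, integral_sub (integrable_const (φ μ)) hint4]
    simp [hA]
  rw [hLHS, hRHS2, hRHS3]
  ring
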